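/- arXiv:2403.07855 — 3 statements merged into one kernel-verified Lean document; each statement's English description precedes it below -/
import Mathlib

section
/- Let (C₂, C₁) be a weight structure w on a triangulated category C with C₁[1] = C₁ (where C₁ = C_{w≥0}, C₂ = C_{w≤0}). Then C₂[1] = C₂ as well. -/
/-! Take a weight decomposition `L → X[1] → R → L[1]` of `X[1]` with `X ∈ C_{w≤0}`. The map
`X[1] → R` comes from a map `X → R[-1] ≅ (R[-2])[1]`, and `R[-2] ∈ C_{w≥0}` because `C_{w≥0}` is
shift-stable, so it vanishes by orthogonality. Hence `L → X[1]` is a split epimorphism and `X[1]`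
is a retract of `L ∈ C_{w≤0}`. -/

open CategoryTheory CategoryTheory.Limits CategoryTheory.Pretriangulated ZeroObject

universe w' v u

variable (C : Type u) [Category.{v} C] [HasZeroObject C] [HasShift C ℤ]
  [Preadditive C] [∀ n : ℤ, (shiftFunctor C n).Additive] [Pretriangulated C]

/-- A t-structure `t = (C_{t≤0}, C_{t≥0})` on a triangulated category, in the homological
convention of the paper.  `le` is the class `C_{t≤0}` and `ge` is the class `C_{t≥0}`.
The condition `C_{t≤0} ⊆ C_{t≤0}[1]` is encoded as `le X → le (X⟦-1⟧)` (the classes being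
closed under isomorphism), and `C_{t≥0}[1] ⊆ C_{t≥0}` as `ge X → ge (X⟦1⟧)`.
The class `C_{t≤i} = C_{t≤0}[i]` is `fun X => le (X⟦-i⟧)` and similarly for `C_{t≥i}`. -/
structure PaperTStructure where
  /-- the class `C_{t≤0}` -/
  le : C → Prop
  /-- the class `C_{t≥0}` -/
  ge : C → Prop
  le_iso : ∀ {X Y : C}, (X ≅ Y) → le X → le Y
  ge_iso : ∀ {X Y : C}, (X ≅ Y) → ge X → ge Y
  le_shift : ∀ X : C, le X → le (X⟦(-1 : ℤ)⟧)
  ge_shift : ∀ X : C, ge X → ge (X⟦(1 : ℤ)⟧)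
  /-- `C_{t≥0}[1] ⊥ C_{t≤0}` -/
  orth : ∀ (X Y : C), ge X → le Y → ∀ f : X⟦(1 : ℤ)⟧ ⟶ Y, f = 0
  /-- every object `M` admits a `t`-decomposition `L → M → R → L[1]` with `L ∈ C_{t≥0}`,
  `R ∈ C_{t≤0}[-1]` (i.e. `R⟦1⟧ ∈ C_{t≤0}`) -/
  decomp : ∀ M : C, ∃ (L R : C) (f : L ⟶ M) (g : M ⟶ R) (h : R ⟶ L⟦(1 : ℤ)⟧),
    (Triangle.mk f g h ∈ distTriang C) ∧ ge L ∧ le (R⟦(1 : ℤ)⟧)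

/-- A weight structure `w = (C_{w≤0}, C_{w≥0})` on a triangulated category, in the homological
convention of the paper.  `le` is the class `C_{w≤0}` and `ge` is the class `C_{w≥0}`;
both are retraction-closed.  `C_{w≤i} = C_{w≤0}[i]` is `fun X => le (X⟦-i⟧)`, similarly `ge`. -/
structure PaperWeightStructure where
  /-- the class `C_{w≤0}` -/
  le : C → Prop
  /-- the class `C_{w≥0}` -/
  ge : C → Prop
  le_retract : ∀ (X Y : C), le Y → (∃ (i : X ⟶ Y) (r : Y ⟶ X), i ≫ r = 𝟙 X) → le X
  ge_retract : ∀ (X Y : C), ge Y → (∃ (i : X ⟶ Y) (r : Y ⟶ X), i ≫ r = 𝟙 X) → ge X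
  le_shift : ∀ X : C, le X → le (X⟦(-1 : ℤ)⟧)
  ge_shift : ∀ X : C, ge X → ge (X⟦(1 : ℤ)⟧)
  /-- `C_{w≤0} ⊥ C_{w≥0}[1]` -/
  orth : ∀ (X Y : C), le X → ge Y → ∀ f : X ⟶ Y⟦(1 : ℤ)⟧, f = 0
  /-- every object `M` admits a weight decomposition `L → M → R → L[1]` with `L ∈ C_{w≤0}`,
  `R ∈ C_{w≥0}[1]` (i.e. `R⟦-1⟧ ∈ C_{w≥0}`) -/
  decomp : ∀ M : C, ∃ (L R : C) (f : L ⟶ M) (g : M ⟶ R) (h : R ⟶ L⟦(1 : ℤ)⟧),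
    (Triangle.mk f g h ∈ distTriang C) ∧ le L ∧ ge (R⟦(-1 : ℤ)⟧)

/-- A class of objects is extension-closed if it contains `0` and for every distinguished
triangle `X → Y → Z → X[1]` with `X, Z` in the class, `Y` lies in the class. -/
def ExtClosed (P : C → Prop) : Prop :=
  P (0 : C) ∧ ∀ T : Triangle C, (T ∈ distTriang C) → P T.obj₁ → P T.obj₃ → P T.obj₂

/-- A class of objects is retraction-closed if it contains all retracts of its elements. -/
def RetractClosed (P : C → Prop) : Prop :=
  ∀ X Y : C, P Y → (∃ (i : X ⟶ Y) (r : Y ⟶ X), i ≫ r = 𝟙 X) → P X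

namespace PaperWeightStructure

variable {C} (w : PaperWeightStructure C)

lemma le_of_iso {X Y : C} (e : X ≅ Y) (hX : w.le X) : w.le Y :=
  w.le_retract _ _ hX ⟨e.inv, e.hom, e.inv_hom_id⟩

lemma ge_of_iso {X Y : C} (e : X ≅ Y) (hX : w.ge X) : w.ge Y :=
  w.ge_retract _ _ hX ⟨e.inv, e.hom, e.inv_hom_id⟩

lemma le_of_isSplitEpi {L M : C} (f : L ⟶ M) [IsSplitEpi f] (hL : w.le L) : w.le M :=
  w.le_retract _ _ hL ⟨section_ f, f, IsSplitEpi.id f⟩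

lemma le_of_le_shift_one {X : C} (hX : w.le (X⟦(1 : ℤ)⟧)) : w.le X :=
  w.le_of_iso ((shiftFunctorCompIsoId C (1 : ℤ) (-1) (by norm_num)).app X) (w.le_shift _ hX)

lemma ge_shift_neg_one_of_shift_stable (h : ∀ X : C, w.ge (X⟦(1 : ℤ)⟧) ↔ w.ge X) {X : C}
    (hX : w.ge X) : w.ge (X⟦(-1 : ℤ)⟧) :=
  (h _).1 (w.ge_of_iso ((shiftFunctorCompIsoId C (-1 : ℤ) 1 (by norm_num)).app X).symm hX)

lemma hom_eq_zero_of_le_of_ge_shift_neg_one {X Y : C} (hX : w.le X) (hY : w.ge (Y⟦(-1 : ℤ)⟧))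
    (f : X ⟶ Y) : f = 0 := by
  rw [← cancel_mono ((shiftFunctorCompIsoId C (-1 : ℤ) 1 (by norm_num)).app Y).inv, zero_comp]
  exact w.orth _ _ hX hY _

lemma hom_shift_one_eq_zero {X Y : C} (hX : w.le X) (hY : w.ge (Y⟦(-1 : ℤ)⟧⟦(-1 : ℤ)⟧))
    (f : X⟦(1 : ℤ)⟧ ⟶ Y) : f = 0 := by
  rw [← cancel_mono ((shiftFunctorCompIsoId C (-1 : ℤ) 1 (by norm_num)).app Y).inv, zero_comp,
    ← (shiftFunctor C (1 : ℤ)).map_preimage (f ≫ _),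
    w.hom_eq_zero_of_le_of_ge_shift_neg_one hX hY ((shiftFunctor C (1 : ℤ)).preimage _),
    Functor.map_zero]

end PaperWeightStructure

/-- if `w` is a weight structure with `C_{w≥0}[1] = C_{w≥0}`, then also
`C_{w≤0}[1] = C_{w≤0}` (shift-stability of the classes is expressed objectwise, the classes
being closed under isomorphism). -/
theorem stmt7 (w : PaperWeightStructure C)
    (h : ∀ X : C, w.ge (X⟦(1 : ℤ)⟧) ↔ w.ge X) :
    ∀ X : C, w.le (X⟦(1 : ℤ)⟧) ↔ w.le X := by
  intro X
  refine ⟨w.le_of_le_shift_one, fun hX => ?_⟩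
  obtain ⟨L, R, f, g, k, hT, hL, hR⟩ := w.decomp (X⟦(1 : ℤ)⟧)
  have hg : g = 0 :=
    w.hom_shift_one_eq_zero hX (w.ge_shift_neg_one_of_shift_stable h hR) g
  have : Epi f := Triangle.epi₁ _ hT hg
  have : IsSplitEpi f := isSplitEpi_of_epi f
  exact w.le_of_isSplitEpi f hL
end

section
/- Let w = (C₂, C₁) be a weight structure on a triangulated category C (C₂ = C_{w≤0}, C₁ = C_{w≥0}). Then the heart C_{w=0} = C₁ ∩ C₂ is zero if and only if C₁[1] = C₁. -/
open CategoryTheory CategoryTheory.Limits CategoryTheory.Pretriangulated ZeroObject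

universe w' v u

variable (C : Type u) [Category.{v} C] [HasZeroObject C] [HasShift C ℤ]
  [Preadditive C] [∀ n : ℤ, (shiftFunctor C n).Additive] [Pretriangulated C]

/-!
`C_{w≥0}` is the right orthogonal of `C_{w≤-1}` (the weight decomposition of `X[1]` splits when
`X` is right orthogonal to `C_{w≤-1}`), hence extension-closed. If the heart is zero and
`X[1] ∈ C_{w≥0}`, the weight decomposition `L → X[1] → R → L[1]` has `L` in the heart, as an
extension of `R[-1]` and `X[1]`; so `L = 0`, `X[1] ≅ R` and `X ≅ R[-1] ∈ C_{w≥0}`. Conversely, if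
`C_{w≥0}` is stable under `[-1]`, an object `X` of the heart has `X[-1] ∈ C_{w≥0}`, and the
isomorphism `X ≅ X[-1][1]` vanishes by orthogonality.
-/

namespace PaperWeightStructure

variable {C} (w : PaperWeightStructure C)

lemma ge_of_retract {X Y : C} (h : Retract X Y) (hY : w.ge Y) : w.ge X :=
  w.ge_retract X Y hY ⟨h.i, h.r, h.retract⟩

lemma hom_eq_zero_of_le_of_ge {X Y : C} (hY : w.le Y) (hX : w.ge X)
    (f : Y⟦(-1 : ℤ)⟧ ⟶ X) : f = 0 := by
  have h : (shiftNegShift Y (1 : ℤ)).inv ≫ f⟦(1 : ℤ)⟧' = 0 := w.orth _ _ hY hX _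
  apply (shiftFunctor C (1 : ℤ)).map_injective
  rw [Functor.map_zero, ← cancel_epi (shiftNegShift Y (1 : ℤ)).inv, h, comp_zero]

lemma ge_of_forall_hom_eq_zero (X : C)
    (hX : ∀ Y : C, w.le Y → ∀ φ : Y⟦(-1 : ℤ)⟧ ⟶ X, φ = 0) : w.ge X := by
  obtain ⟨L, R, f, g, h, hT, hL, hR⟩ := w.decomp (X⟦(1 : ℤ)⟧)
  have hf : f = 0 := by
    apply (shiftFunctor C (-1 : ℤ)).map_injective
    rw [Functor.map_zero, ← cancel_mono (shiftShiftNeg X (1 : ℤ)).hom, zero_comp]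
    exact hX L hL _
  obtain ⟨r, hr⟩ :=
    Triangle.yoneda_exact₂ _ hT (𝟙 _) (by rw [Triangle.mk_mor₁, hf]; exact zero_comp)
  let split : Retract (X⟦(1 : ℤ)⟧) R := ⟨g, r, hr.symm⟩
  exact w.ge_of_retract
    ((shiftShiftNeg X (1 : ℤ)).symm.retract.trans (split.map (shiftFunctor C (-1 : ℤ)))) hR

lemma ge_extClosed : ExtClosed C w.ge := by
  refine ⟨w.ge_of_forall_hom_eq_zero 0 fun _ _ _ => (isZero_zero C).eq_of_tgt _ _, ?_⟩
  intro T hT h₁ h₃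
  refine w.ge_of_forall_hom_eq_zero _ fun Y hY φ => ?_
  obtain ⟨ψ, rfl⟩ := Triangle.coyoneda_exact₂ T hT φ (w.hom_eq_zero_of_le_of_ge hY h₃ _)
  rw [w.hom_eq_zero_of_le_of_ge hY h₁ ψ, zero_comp]

lemma ge_of_ge_shift_of_heart_isZero (hheart : ∀ X : C, w.le X → w.ge X → IsZero X) {X : C}
    (hX : w.ge (X⟦(1 : ℤ)⟧)) : w.ge X := by
  obtain ⟨L, R, f, g, h, hT, hL, hR⟩ := w.decomp (X⟦(1 : ℤ)⟧)
  have hL' : w.ge L := w.ge_extClosed.2 _ (inv_rot_of_distTriang _ hT) hR hX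
  have : IsIso g := (Triangle.isZero₁_iff_isIso₂ _ hT).1 (hheart L hL hL')
  exact w.ge_of_retract
    ((shiftShiftNeg X (1 : ℤ)).symm ≪≫ (shiftFunctor C (-1 : ℤ)).mapIso (asIso g)).retract hR

lemma isZero_of_le_of_ge_shift {X : C} (hle : w.le X) (hge : w.ge (X⟦(-1 : ℤ)⟧)) :
    IsZero X := by
  rw [IsZero.iff_id_eq_zero, ← (shiftNegShift X (1 : ℤ)).inv_hom_id,
    w.orth X _ hle hge (shiftNegShift X (1 : ℤ)).inv, zero_comp]

end PaperWeightStructure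

/-- the heart `C_{w≤0} ∩ C_{w≥0}` of a weight structure is zero if and only if
`C_{w≥0}[1] = C_{w≥0}`. -/
theorem stmt8 (w : PaperWeightStructure C) :
    (∀ X : C, w.le X → w.ge X → IsZero X) ↔ (∀ X : C, w.ge (X⟦(1 : ℤ)⟧) ↔ w.ge X) := by
  constructor
  · intro hheart X
    exact ⟨w.ge_of_ge_shift_of_heart_isZero hheart, w.ge_shift X⟩
  · intro hshift X hle hge
    exact w.isZero_of_le_of_ge_shift hle
      ((hshift _).1 (w.ge_of_retract (shiftNegShift X (1 : ℤ)).retract hge))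
end

section
/- Let t be a t-structure on a triangulated category C. Then the full subcategory C_{t=-∞} with objects ⋂_{i∈ℤ} C_{t≤i} is a triangulated subcategory of C, and t restricts to it (the intersections of C_{t≤0} and C_{t≥0} with it form a t-structure on C_{t=-∞}). Moreover, if t is essentially bounded below (for every M, Hᵗ_i(M) = 0 for all i ≪ 0), then (C_{t=-∞}, C_+) is a semi-orthogonal decomposition of C, where C_+ is the full subcategory with objects ⋃_{i∈ℤ} C_{t≥i}: that is, Obj C_+ ⊥ Obj C_{t=-∞} and every object of C is an extension of an object of C_{t=-∞} by an object of C_+. -/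
open CategoryTheory CategoryTheory.Limits CategoryTheory.Pretriangulated ZeroObject

universe w' v u

variable (C : Type u) [Category.{v} C] [HasZeroObject C] [HasShift C ℤ]
  [Preadditive C] [∀ n : ℤ, (shiftFunctor C n).Additive] [Pretriangulated C]

/-- A (strictly full) triangulated subcategory, given by its class of objects: it contains
`0`, is closed under isomorphisms, shifts, and extensions. -/
def IsTriangSub (S : C → Prop) : Prop :=
  S (0 : C) ∧ (∀ {X Y : C}, (X ≅ Y) → S X → S Y) ∧
  (∀ (X : C) (n : ℤ), S X → S (X⟦n⟧)) ∧
  (∀ T : Triangle C, (T ∈ distTriang C) → S T.obj₁ → S T.obj₃ → S T.obj₂)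

/-- A t-structure on the full (triangulated) subcategory whose class of objects is `S`. -/
structure RelTStructure (S : C → Prop) where
  le : C → Prop
  ge : C → Prop
  le_sub : ∀ X : C, le X → S X
  ge_sub : ∀ X : C, ge X → S X
  le_iso : ∀ {X Y : C}, (X ≅ Y) → le X → le Y
  ge_iso : ∀ {X Y : C}, (X ≅ Y) → ge X → ge Y
  le_shift : ∀ X : C, le X → le (X⟦(-1 : ℤ)⟧)
  ge_shift : ∀ X : C, ge X → ge (X⟦(1 : ℤ)⟧)
  orth : ∀ (X Y : C), ge X → le Y → ∀ f : X⟦(1 : ℤ)⟧ ⟶ Y, f = 0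
  decomp : ∀ M : C, S M → ∃ (L R : C) (f : L ⟶ M) (g : M ⟶ R) (h : R ⟶ L⟦(1 : ℤ)⟧),
    (Triangle.mk f g h ∈ distTriang C) ∧ ge L ∧ le (R⟦(1 : ℤ)⟧)

/-- The class `⋂_{i ∈ ℤ} C_{t≤i}` (note `X ∈ C_{t≤i} ↔ X⟦-i⟧ ∈ C_{t≤0}`). -/
def NegInf (t : PaperTStructure C) : C → Prop := fun X => ∀ i : ℤ, t.le (X⟦i⟧)

/-! The key observation: if in a `t`-decomposition `L → M → R → L⟦1⟧` the map `L → M` vanishes,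
then `L ≅ 0` and `M ≅ R ∈ C_{t≤-1}`. Maps from `C_{t≥0}` into objects of `C_{t=-∞}` vanish, and
so do maps from `C_{t≥0}` into an extension of two such objects; this gives extension-closedness
of `C_{t=-∞}` and shows that the `t`-decomposition of an object of `C_{t=-∞}` stays inside it.
The semi-orthogonal decomposition of `M` is its `t`-decomposition at the level `m` below which
`M` has no cohomology. -/

section

variable {C}

lemma distinguished_mk_comp_iso {X₁ X₂ X₂' X₃ : C} {f : X₁ ⟶ X₂} {g : X₂ ⟶ X₃}
    {h : X₃ ⟶ X₁⟦(1 : ℤ)⟧} (hT : Triangle.mk f g h ∈ distTriang C) (e : X₂ ≅ X₂') :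
    Triangle.mk (f ≫ e.hom) (e.inv ≫ g) h ∈ distTriang C :=
  isomorphic_distinguished _ hT _
    (Triangle.isoMk _ _ (Iso.refl _) e.symm (Iso.refl _)
      (show (f ≫ e.hom) ≫ e.inv = 𝟙 X₁ ≫ f by simp)
      (show (e.inv ≫ g) ≫ 𝟙 X₃ = e.inv ≫ g by simp)
      (show h ≫ (𝟙 X₁)⟦(1 : ℤ)⟧' = 𝟙 X₃ ≫ h by simp))

end

namespace PaperTStructure

variable {C}
variable (t : PaperTStructure C)

lemma hom_eq_zero_of_ge_of_le_shift_one {X Y : C} (hX : t.ge X) (hY : t.le (Y⟦(1 : ℤ)⟧))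
    (f : X ⟶ Y) : f = 0 :=
  (shiftFunctor C (1 : ℤ)).zero_of_map_zero f (t.orth X _ hX hY _)

lemma le_of_le_shift_one {X : C} (h : t.le (X⟦(1 : ℤ)⟧)) : t.le X :=
  t.le_iso ((shiftFunctorCompIsoId C (1 : ℤ) (-1 : ℤ) (by lia)).app X) (t.le_shift _ h)

lemma isZero_and_isIso_of_decomp_of_mor₁_eq_zero {L M R : C} {f : L ⟶ M} {g : M ⟶ R}
    {h : R ⟶ L⟦(1 : ℤ)⟧} (hT : Triangle.mk f g h ∈ distTriang C) (hL : t.ge L)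
    (hR : t.le (R⟦(1 : ℤ)⟧)) (hf : f = 0) : IsZero L ∧ IsIso g := by
  -- `𝟙 (L⟦1⟧)` factors through `R → L⟦1⟧`, and `L⟦1⟧ → R` vanishes by orthogonality.
  obtain ⟨s, hs⟩ := Triangle.coyoneda_exact₃ _ (rot_of_distTriang _ hT) (𝟙 (L⟦(1 : ℤ)⟧))
    (show 𝟙 _ ≫ (-f⟦(1 : ℤ)⟧') = 0 by simp [hf])
  have hL₁ : IsZero (L⟦(1 : ℤ)⟧) := by
    rw [IsZero.iff_id_eq_zero, hs, t.orth L R hL (t.le_of_le_shift_one hR) s]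
    exact zero_comp
  have hL₀ : IsZero L := IsZero.of_full_of_faithful_of_isZero (shiftFunctor C (1 : ℤ)) L hL₁
  exact ⟨hL₀, (Triangle.isZero₁_iff_isIso₂ _ hT).1 hL₀⟩

lemma le_zero : t.le (0 : C) := by
  obtain ⟨L, R, f, g, h, hT, hL, hR⟩ := t.decomp (0 : C)
  have hg := (t.isZero_and_isIso_of_decomp_of_mor₁_eq_zero hT hL hR
    ((isZero_zero C).eq_of_tgt f 0)).2
  exact t.le_of_le_shift_one (t.le_iso ((shiftFunctor C (1 : ℤ)).mapIso (asIso g).symm) hR)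

end PaperTStructure

namespace NegInf

variable {C} {t : PaperTStructure C}

lemma of_iso {X Y : C} (e : X ≅ Y) (h : NegInf C t X) : NegInf C t Y :=
  fun i => t.le_iso ((shiftFunctor C i).mapIso e) (h i)

lemma shift {X : C} (hX : NegInf C t X) (n : ℤ) : NegInf C t (X⟦n⟧) :=
  fun i => t.le_iso ((shiftFunctorAdd' C n i (n + i) rfl).app X) (hX (n + i))

lemma le {X : C} (hX : NegInf C t X) : t.le X :=
  t.le_iso ((shiftFunctorZero C ℤ).app X) (hX 0)

lemma of_isZero {X : C} (h : IsZero X) : NegInf C t X :=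
  fun i => t.le_iso ((isZero_zero C).iso ((shiftFunctor C i).map_isZero h)) t.le_zero

lemma obj₂_of_distTriang {T : Triangle C} (hT : T ∈ distTriang C) (h₁ : NegInf C t T.obj₁)
    (h₃ : NegInf C t T.obj₃) : NegInf C t T.obj₂ := by
  intro i
  have hTi := Triangle.shift_distinguished T hT i
  obtain ⟨L, R, f, g, h, hD, hL, hR⟩ := t.decomp (T.obj₂⟦i⟧)
  have hf : f = 0 := by
    obtain ⟨f', hf'⟩ := Triangle.coyoneda_exact₂ _ hTi f
      (t.hom_eq_zero_of_ge_of_le_shift_one hL (h₃.shift i 1) _)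
    rw [hf', t.hom_eq_zero_of_ge_of_le_shift_one hL (h₁.shift i 1) f']
    exact zero_comp
  have hg := (t.isZero_and_isIso_of_decomp_of_mor₁_eq_zero hD hL hR hf).2
  exact t.le_iso (asIso g).symm (t.le_of_le_shift_one hR)

end NegInf

namespace PaperTStructure

variable {C}
variable (t : PaperTStructure C)

lemma isTriangSub_negInf : IsTriangSub C (NegInf C t) :=
  ⟨NegInf.of_isZero (isZero_zero C), NegInf.of_iso, fun _ n hX => hX.shift n,
    fun _ hT h₁ h₃ => NegInf.obj₂_of_distTriang hT h₁ h₃⟩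

def restrictNegInf : RelTStructure C (NegInf C t) where
  le := NegInf C t
  ge X := t.ge X ∧ NegInf C t X
  le_sub _ h := h
  ge_sub _ h := h.2
  le_iso e h := h.of_iso e
  ge_iso e h := ⟨t.ge_iso e h.1, h.2.of_iso e⟩
  le_shift _ h := h.shift (-1)
  ge_shift X h := ⟨t.ge_shift X h.1, h.2.shift 1⟩
  orth X Y hX hY f := t.orth X Y hX.1 hY.le f
  decomp M hM := by
    obtain ⟨L, R, f, g, h, hT, hL, hR⟩ := t.decomp M
    obtain ⟨hL₀, hg⟩ := t.isZero_and_isIso_of_decomp_of_mor₁_eq_zero hT hL hR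
      (t.hom_eq_zero_of_ge_of_le_shift_one hL (hM 1) f)
    exact ⟨L, R, f, g, h, hT, ⟨hL, NegInf.of_isZero hL₀⟩, (hM.of_iso (asIso g)).shift 1⟩

lemma hom_eq_zero_of_negInf {X Y : C} {i : ℤ} (hX : t.ge (X⟦i⟧)) (hY : NegInf C t Y)
    (f : X ⟶ Y) : f = 0 :=
  (shiftFunctor C i).zero_of_map_zero f
    (t.hom_eq_zero_of_ge_of_le_shift_one hX (hY.shift i 1) _)

lemma decomp_shift (M : C) (m : ℤ) :
    ∃ (L R : C) (f : L ⟶ M) (g : M ⟶ R) (h : R ⟶ L⟦(1 : ℤ)⟧),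
      Triangle.mk f g h ∈ distTriang C ∧ t.ge (L⟦(-m : ℤ)⟧) ∧ t.le (R⟦(1 - m : ℤ)⟧) := by
  obtain ⟨L, R, f, g, h, hT, hL, hR⟩ := t.decomp (M⟦(-m : ℤ)⟧)
  exact ⟨_, _, _, _, _, distinguished_mk_comp_iso (Triangle.shift_distinguished _ hT m)
      ((shiftFunctorCompIsoId C (-m) m (neg_add_cancel m)).app M),
    t.ge_iso ((shiftFunctorCompIsoId C m (-m) (add_neg_cancel m)).app L).symm hL,
    t.le_iso ((shiftFunctorAdd' C m (1 - m) 1 (by lia)).app R) hR⟩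

end PaperTStructure

/-- for a t-structure `t` on `C`, the full subcategory `C_{t=-∞}` with objects
`⋂_{i∈ℤ} C_{t≤i}` is a triangulated subcategory and `t` restricts to it.  Moreover, if `t`
is essentially bounded below (for every `M` there is `m` such that `Hᵗ_i(M) = 0` for all
`i < m`, equivalently any choice of `t_{≤ m-1}M` lies in `C_{t=-∞}`), then
`(C_{t=-∞}, C_+)` is a semi-orthogonal decomposition of `C`, where `C_+` has objects
`⋃_{i∈ℤ} C_{t≥i}`: `Obj C_+ ⊥ Obj C_{t=-∞}` and every object of `C` is an extension of an
object of `C_{t=-∞}` by an object of `C_+`. -/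
theorem stmt18 (t : PaperTStructure C) :
    IsTriangSub C (NegInf C t) ∧
    (∃ t' : RelTStructure C (NegInf C t),
      (∀ X : C, t'.le X ↔ t.le X ∧ NegInf C t X) ∧
      (∀ X : C, t'.ge X ↔ t.ge X ∧ NegInf C t X)) ∧
    ((∀ M : C, ∃ m : ℤ, ∀ (L R : C) (f : L ⟶ M) (g : M ⟶ R) (h : R ⟶ L⟦(1 : ℤ)⟧),
        (Triangle.mk f g h ∈ distTriang C) →
        t.ge (L⟦(-m : ℤ)⟧) → t.le (R⟦(1 - m : ℤ)⟧) → NegInf C t R) →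
      ((∀ X Y : C, (∃ i : ℤ, t.ge (X⟦(-i : ℤ)⟧)) → NegInf C t Y → ∀ f : X ⟶ Y, f = 0) ∧
        (∀ M : C, ∃ (B A : C) (f : B ⟶ M) (g : M ⟶ A) (h : A ⟶ B⟦(1 : ℤ)⟧),
          (Triangle.mk f g h ∈ distTriang C) ∧
          (∃ i : ℤ, t.ge (B⟦(-i : ℤ)⟧)) ∧ NegInf C t A))) := by
  refine ⟨t.isTriangSub_negInf,
    ⟨t.restrictNegInf, fun _ => ⟨fun h => ⟨h.le, h⟩, And.right⟩, fun _ => Iff.rfl⟩,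
    fun hBounded => ⟨fun _ _ ⟨_, hX⟩ hY f => t.hom_eq_zero_of_negInf hX hY f, fun M => ?_⟩⟩
  obtain ⟨m, hm⟩ := hBounded M
  obtain ⟨L, R, f, g, h, hT, hL, hR⟩ := t.decomp_shift M m
  exact ⟨L, R, f, g, h, hT, ⟨m, hL⟩, hm L R f g h hT hL hR⟩
end
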